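/- arXiv:2504.09600 — 5 statements merged into one kernel-verified Lean document; each statement's English description precedes it below -/
import Mathlib

section
/- For the two-dimensional compressible Neo-Hookean energy Φ(λ₁,λ₂) = (λ₁² + λ₂²)/2 + (λ₁λ₂)^(−γ)/γ with γ ≥ 1, the Hessian matrix of Φ is positive definite at every point (λ₁,λ₂) with λ₁ > 0 and λ₂ > 0. -/
open Real

/-- The two-dimensional compressible Neo-Hookean energy. -/
noncomputable def neoHookean (γ : ℝ) : (Fin 2 → ℝ) → ℝ :=
  fun x => ((x 0) ^ 2 + (x 1) ^ 2) / 2 + (x 0 * x 1) ^ (-γ) / γ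

/-- The Hessian (matrix of second partial derivatives) of a function on ℝ². -/
noncomputable def hess (Φ : (Fin 2 → ℝ) → ℝ) (p : Fin 2 → ℝ) : Matrix (Fin 2) (Fin 2) ℝ :=
  fun i j => fderiv ℝ (fun x => fderiv ℝ Φ x (Pi.single j 1)) p (Pi.single i 1)

namespace NeoHookeanAux

noncomputable abbrev pr (i : Fin 2) : (Fin 2 → ℝ) →L[ℝ] ℝ :=
  ContinuousLinearMap.proj i

lemma neo_hasFDerivAt (γ : ℝ) (hγ : γ ≠ 0) (x : Fin 2 → ℝ) (h0 : 0 < x 0) (h1 : 0 < x 1) :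
    HasFDerivAt (neoHookean γ)
      ((x 0 - (x 0 * x 1) ^ (-γ - 1) * x 1) • pr 0
        + (x 1 - (x 0 * x 1) ^ (-γ - 1) * x 0) • pr 1) x := by
  have hp0 : HasFDerivAt (fun y : Fin 2 → ℝ => y 0) (pr 0) x := hasFDerivAt_apply 0 x
  have hp1 : HasFDerivAt (fun y : Fin 2 → ℝ => y 1) (pr 1) x := hasFDerivAt_apply 1 x
  have hmul : HasFDerivAt (fun y : Fin 2 → ℝ => y 0 * y 1) (x 0 • pr 1 + x 1 • pr 0) x :=
    hp0.mul hp1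
  have ht : (0:ℝ) < x 0 * x 1 := mul_pos h0 h1
  have hr : HasDerivAt (fun t : ℝ => t ^ (-γ)) (-γ * (x 0 * x 1) ^ (-γ - 1)) (x 0 * x 1) :=
    Real.hasDerivAt_rpow_const (Or.inl ht.ne')
  have hB : HasFDerivAt (fun y : Fin 2 → ℝ => (y 0 * y 1) ^ (-γ))
      ((-γ * (x 0 * x 1) ^ (-γ - 1)) • (x 0 • pr 1 + x 1 • pr 0)) x :=
    by have := hr.comp_hasFDerivAt x hmul; exact this
  have hsq0 : HasFDerivAt (fun y : Fin 2 → ℝ => (y 0) ^ 2) (x 0 • pr 0 + x 0 • pr 0) x := by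
    have h : HasFDerivAt (fun y : Fin 2 → ℝ => y 0 * y 0) (x 0 • pr 0 + x 0 • pr 0) x := hp0.mul hp0
    simpa [sq] using h
  have hsq1 : HasFDerivAt (fun y : Fin 2 → ℝ => (y 1) ^ 2) (x 1 • pr 1 + x 1 • pr 1) x := by
    have h : HasFDerivAt (fun y : Fin 2 → ℝ => y 1 * y 1) (x 1 • pr 1 + x 1 • pr 1) x := hp1.mul hp1
    simpa [sq] using h
  have hA : HasFDerivAt (fun y : Fin 2 → ℝ => ((y 0) ^ 2 + (y 1) ^ 2) / 2)
      ((2:ℝ)⁻¹ • (x 0 • pr 0 + x 0 • pr 0 + (x 1 • pr 1 + x 1 • pr 1))) x := by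
    simpa [div_eq_inv_mul] using (hsq0.add hsq1).const_mul ((2:ℝ)⁻¹)
  have hB' : HasFDerivAt (fun y : Fin 2 → ℝ => (y 0 * y 1) ^ (-γ) / γ)
      (γ⁻¹ • ((-γ * (x 0 * x 1) ^ (-γ - 1)) • (x 0 • pr 1 + x 1 • pr 0))) x := by
    simpa [div_eq_inv_mul] using hB.const_mul (γ⁻¹)
  have : HasFDerivAt (neoHookean γ) ((2:ℝ)⁻¹ • (x 0 • pr 0 + x 0 • pr 0 + (x 1 • pr 1 + x 1 • pr 1))
      + γ⁻¹ • ((-γ * (x 0 * x 1) ^ (-γ - 1)) • (x 0 • pr 1 + x 1 • pr 0))) x := hA.add hB'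
  convert this using 1
  ext w
  simp [pr, ContinuousLinearMap.proj]
  field_simp
  ring

lemma quadrant_eventually (p : Fin 2 → ℝ) (h1 : 0 < p 0) (h2 : 0 < p 1) :
    ∀ᶠ x in nhds p, 0 < x 0 ∧ 0 < x 1 := by
  have hopen : IsOpen {x : Fin 2 → ℝ | 0 < x 0 ∧ 0 < x 1} :=
    (isOpen_lt continuous_const (continuous_apply 0)).inter
      (isOpen_lt continuous_const (continuous_apply 1))
  exact hopen.eventually_mem ⟨h1, h2⟩

lemma fderiv_apply (γ : ℝ) (hγ : γ ≠ 0) (x : Fin 2 → ℝ) (h0 : 0 < x 0) (h1 : 0 < x 1)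
    (j : Fin 2) :
    fderiv ℝ (neoHookean γ) x (Pi.single j 1)
      = x j - (x 0 * x 1) ^ (-γ - 1) * x (1 - j) := by
  rw [(neo_hasFDerivAt γ hγ x h0 h1).fderiv]
  fin_cases j <;>
    simp [pr, ContinuousLinearMap.proj, Pi.single_apply]

end NeoHookeanAux

open NeoHookeanAux in
/-- for γ ≥ 1, the Hessian of Φ(λ₁,λ₂) = (λ₁²+λ₂²)/2 + (λ₁λ₂)^(−γ)/γ
is positive definite at every point of the open positive quadrant. -/
theorem neoHookean_hessian_posDef (γ : ℝ) (hγ : 1 ≤ γ)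
    (p : Fin 2 → ℝ) (h1 : 0 < p 0) (h2 : 0 < p 1) :
    ∀ v : Fin 2 → ℝ, v ≠ 0 →
      0 < ∑ i : Fin 2, ∑ j : Fin 2, v i * hess (neoHookean γ) p i j * v j := by
  intro v hv
  have hγ0 : γ ≠ 0 := by linarith
  have ht : (0:ℝ) < p 0 * p 1 := mul_pos h1 h2
  set x := p 0
  set y := p 1
  set s : ℝ := (x * y) ^ (-γ - 1) with hs
  set u : ℝ := (x * y) ^ (-γ - 2) with hu
  have hupos : 0 < u := Real.rpow_pos_of_pos ht _
  have hsu : s = u * (x * y) := by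
    rw [hs, hu, show -γ - 1 = -γ - 2 + 1 by ring, Real.rpow_add ht, Real.rpow_one]
  -- derivatives of the partial-derivative functions
  have hp0 : ∀ z : Fin 2 → ℝ, HasFDerivAt (fun w : Fin 2 → ℝ => w 0) (pr 0) z :=
    fun z => hasFDerivAt_apply 0 z
  have hp1 : ∀ z : Fin 2 → ℝ, HasFDerivAt (fun w : Fin 2 → ℝ => w 1) (pr 1) z :=
    fun z => hasFDerivAt_apply 1 z
  have hmul : HasFDerivAt (fun w : Fin 2 → ℝ => w 0 * w 1) (x • pr 1 + y • pr 0) p :=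
    (hp0 p).mul (hp1 p)
  have hrs : HasDerivAt (fun t : ℝ => t ^ (-γ - 1)) ((-γ - 1) * (x * y) ^ (-γ - 2)) (x * y) := by
    have := Real.hasDerivAt_rpow_const (x := x * y) (p := -γ - 1) (Or.inl ht.ne')
    convert this using 2
    ring
  have hC : HasFDerivAt (fun w : Fin 2 → ℝ => (w 0 * w 1) ^ (-γ - 1))
      (((-γ - 1) * u) • (x • pr 1 + y • pr 0)) p := by have := hrs.comp_hasFDerivAt p hmul; exact this
  -- partial derivative functions
  have hD0 : HasFDerivAt (fun w : Fin 2 → ℝ => w 0 - (w 0 * w 1) ^ (-γ - 1) * w 1)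
      (pr 0 - (((x*y)^(-γ-1)) • pr 1 + y • (((-γ - 1) * u) • (x • pr 1 + y • pr 0)))) p :=
    (hp0 p).sub (hC.mul (hp1 p))
  have hD1 : HasFDerivAt (fun w : Fin 2 → ℝ => w 1 - (w 0 * w 1) ^ (-γ - 1) * w 0)
      (pr 1 - (((x*y)^(-γ-1)) • pr 0 + x • (((-γ - 1) * u) • (x • pr 1 + y • pr 0)))) p :=
    (hp1 p).sub (hC.mul (hp0 p))
  -- identify hess entries
  have hev : ∀ j : Fin 2,
      (fun z => fderiv ℝ (neoHookean γ) z (Pi.single j 1))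
        =ᶠ[nhds p] (fun z => z j - (z 0 * z 1) ^ (-γ - 1) * z (1 - j)) := by
    intro j
    filter_upwards [quadrant_eventually p h1 h2] with z hz
    exact fderiv_apply γ hγ0 z hz.1 hz.2 j
  have hhess : ∀ i j : Fin 2, hess (neoHookean γ) p i j
      = fderiv ℝ (fun z : Fin 2 → ℝ => z j - (z 0 * z 1) ^ (-γ - 1) * z (1 - j)) p
          (Pi.single i 1) := by
    intro i j
    unfold hess
    rw [(hev j).fderiv_eq]
  have h00 : hess (neoHookean γ) p 0 0 = 1 + (γ + 1) * u * y ^ 2 := by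
    rw [hhess 0 0]
    have : (1:Fin 2) - 0 = 1 := rfl
    rw [this, hD0.fderiv]
    simp [pr, Pi.single_apply]
    ring
  have h01 : hess (neoHookean γ) p 0 1 = γ * s := by
    rw [hhess 0 1]
    have : (1:Fin 2) - 1 = 0 := rfl
    rw [this, hD1.fderiv]
    simp [pr, Pi.single_apply, ← hs]
    rw [hsu]; ring
  have h10 : hess (neoHookean γ) p 1 0 = γ * s := by
    rw [hhess 1 0]
    have : (1:Fin 2) - 0 = 1 := rfl
    rw [this, hD0.fderiv]
    simp [pr, Pi.single_apply, ← hs]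
    rw [hsu]; ring
  have h11 : hess (neoHookean γ) p 1 1 = 1 + (γ + 1) * u * x ^ 2 := by
    rw [hhess 1 1]
    have : (1:Fin 2) - 1 = 0 := rfl
    rw [this, hD1.fderiv]
    simp [pr, Pi.single_apply]
    ring
  -- positivity
  have hv2 : 0 < v 0 ^ 2 + v 1 ^ 2 := by
    rcases Function.ne_iff.1 hv with ⟨i, hi⟩
    fin_cases i <;> [skip; skip] <;>
      · have : (0:ℝ) < _ ^ 2 := pow_pos (abs_pos.2 (by simpa using hi)) 2
        nlinarith [sq_nonneg (v 0), sq_nonneg (v 1), sq_abs (v 0), sq_abs (v 1)]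
  rw [Fin.sum_univ_two]
  rw [Fin.sum_univ_two, Fin.sum_univ_two]
  rw [h00, h01, h10, h11, hsu]
  nlinarith [hv2, mul_nonneg (mul_nonneg (by linarith : (0:ℝ) ≤ γ) hupos.le)
      (sq_nonneg (y * v 0 + x * v 1)),
    mul_nonneg hupos.le (sq_nonneg (y * v 0)), mul_nonneg hupos.le (sq_nonneg (x * v 1))]
end

section
/- Every point (λ₁,λ₂) ∈ ℝ₊² with λ₁λ₂ > 1 is a point of strict convexity of the two-dimensional compressible Neo-Hookean energy Φ(λ₁,λ₂) = (λ₁² + λ₂²)/2 + (λ₁λ₂)^(−γ)/γ (γ ≥ 1): for all (μ₁,μ₂) ∈ ℝ₊² distinct from (λ₁,λ₂), Φ(μ₁,μ₂) > Φ(λ₁,λ₂) + ∂Φ/∂λ₁(λ₁,λ₂)(μ₁−λ₁) + ∂Φ/∂λ₂(λ₁,λ₂)(μ₂−λ₂). -/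
open Real

/-- Bernoulli-type inequality for negative exponents. -/
lemma neoHookean_bern_aux (γ : ℝ) (hγ : 0 < γ) {r : ℝ} (hr : 0 < r) :
    1 - γ * (r - 1) ≤ r ^ (-γ) := by
  have hlog : Real.log r ≤ r - 1 := Real.log_le_sub_one_of_pos hr
  rw [Real.rpow_def_of_pos hr]
  have hexp : Real.log r * (-γ) + 1 ≤ Real.exp (Real.log r * (-γ)) :=
    Real.add_one_le_exp _
  nlinarith [hexp, mul_le_mul_of_nonneg_left hlog hγ.le]

/-- Tangent-line inequality for the convex function `x ↦ x ^ (-γ)` on `(0,∞)`. -/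
lemma neoHookean_key_aux (γ : ℝ) (hγ : 0 < γ) {s t : ℝ} (hs : 0 < s) (ht : 0 < t) :
    t ^ (-γ) - γ * t ^ (-γ - 1) * (s - t) ≤ s ^ (-γ) := by
  have hb := neoHookean_bern_aux γ hγ (div_pos hs ht)
  have hdiv : (s / t) ^ (-γ) = s ^ (-γ) / t ^ (-γ) := Real.div_rpow hs.le ht.le (-γ)
  have hT : (0:ℝ) < t ^ (-γ) := Real.rpow_pos_of_pos ht _
  have hc : t ^ (-γ - 1) = t ^ (-γ) / t := by
    rw [show -γ - 1 = -γ - (1:ℝ) from rfl, Real.rpow_sub ht, Real.rpow_one]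
  rw [hdiv, le_div_iff₀ hT] at hb
  rw [hc]
  have h2 : t ^ (-γ) - γ * (t ^ (-γ) / t) * (s - t) = (1 - γ * (s / t - 1)) * t ^ (-γ) := by
    field_simp
  rw [h2]; exact hb

/-- every point (λ₁,λ₂) of the positive quadrant with λ₁λ₂ > 1 is a
point of strict convexity of Φ(λ₁,λ₂) = (λ₁²+λ₂²)/2 + (λ₁λ₂)^(−γ)/γ (γ ≥ 1):
Φ lies strictly above its tangent plane there at all other points of ℝ₊². -/
theorem neoHookean_point_of_strict_convexity (γ : ℝ) (hγ : 1 ≤ γ)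
    (p : Fin 2 → ℝ) (h1 : 0 < p 0) (h2 : 0 < p 1) (hdet : 1 < p 0 * p 1) :
    ∀ q : Fin 2 → ℝ, 0 < q 0 → 0 < q 1 → q ≠ p →
      neoHookean γ p + fderiv ℝ (neoHookean γ) p (q - p) < neoHookean γ q := by
  intro q hq0 hq1 hne
  have hγ0 : (0:ℝ) < γ := by linarith
  have hp01 : (0:ℝ) < p 0 * p 1 := by positivity
  have hs01 : (0:ℝ) < q 0 * q 1 := by positivity
  -- the derivative
  have h0 : HasFDerivAt (fun x : Fin 2 → ℝ => x 0)
      (ContinuousLinearMap.proj 0 : (Fin 2 → ℝ) →L[ℝ] ℝ) p := hasFDerivAt_apply 0 p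
  have h1' : HasFDerivAt (fun x : Fin 2 → ℝ => x 1)
      (ContinuousLinearMap.proj 1 : (Fin 2 → ℝ) →L[ℝ] ℝ) p := hasFDerivAt_apply 1 p
  have hsq0 : HasFDerivAt (fun x : Fin 2 → ℝ => x 0 ^ 2)
      ((2 * p 0) • (ContinuousLinearMap.proj 0 : (Fin 2 → ℝ) →L[ℝ] ℝ)) p := by
    simpa [pow_two, two_mul, add_smul] using h0.fun_mul h0
  have hsq1 : HasFDerivAt (fun x : Fin 2 → ℝ => x 1 ^ 2)
      ((2 * p 1) • (ContinuousLinearMap.proj 1 : (Fin 2 → ℝ) →L[ℝ] ℝ)) p := by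
    simpa [pow_two, two_mul, add_smul] using h1'.fun_mul h1'
  have hmul := h0.fun_mul h1'
  have hr := hmul.rpow_const (p := -γ) (Or.inl hp01.ne')
  have hq2 : HasFDerivAt (fun x : Fin 2 → ℝ => ((x 0) ^ 2 + (x 1) ^ 2) / 2)
      (p 0 • (ContinuousLinearMap.proj 0 : (Fin 2 → ℝ) →L[ℝ] ℝ)
        + p 1 • ContinuousLinearMap.proj 1) p := by
    have h := (hsq0.fun_add hsq1).fun_const_smul (2:ℝ)⁻¹
    have heq : (fun x : Fin 2 → ℝ => (2:ℝ)⁻¹ • (x 0 ^ 2 + x 1 ^ 2)) =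
        fun x : Fin 2 → ℝ => ((x 0) ^ 2 + (x 1) ^ 2) / 2 := by
      funext x; simp [smul_eq_mul]; ring
    rw [heq] at h
    refine h.congr_fderiv ?_
    exact ContinuousLinearMap.ext fun w => by
      simp only [ContinuousLinearMap.add_apply, ContinuousLinearMap.smul_apply,
        ContinuousLinearMap.proj_apply, smul_eq_mul]; ring
  have hr' := hr.fun_const_smul γ⁻¹
  have heq2 : (fun x : Fin 2 → ℝ => γ⁻¹ • ((x 0 * x 1) ^ (-γ))) =
      fun x : Fin 2 → ℝ => (x 0 * x 1) ^ (-γ) / γ := by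
    funext x; simp [smul_eq_mul]; ring
  rw [heq2] at hr'
  have hΦ : HasFDerivAt (neoHookean γ) _ p := hq2.add hr'
  have happ : fderiv ℝ (neoHookean γ) p (q - p) =
      p 0 * (q 0 - p 0) + p 1 * (q 1 - p 1)
        - (p 0 * p 1) ^ (-γ - 1) * (p 1 * (q 0 - p 0) + p 0 * (q 1 - p 1)) := by
    rw [hΦ.fderiv]
    simp only [ContinuousLinearMap.add_apply, ContinuousLinearMap.smul_apply,
      ContinuousLinearMap.proj_apply, Pi.sub_apply, smul_eq_mul]
    field_simp
    ring
  rw [happ]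
  -- scalar inequality
  set a := p 0; set b := p 1; set u := q 0; set v := q 1
  set c : ℝ := (a * b) ^ (-γ - 1) with hcdef
  have hc0 : 0 < c := Real.rpow_pos_of_pos hp01 _
  have hc1 : c < 1 := Real.rpow_lt_one_of_one_lt_of_neg hdet (by linarith)
  have hQ : 0 < (u - a) ^ 2 + (v - b) ^ 2 := by
    have hor : u ≠ a ∨ v ≠ b := by
      by_contra h
      push_neg at h
      refine hne (funext fun i => ?_)
      fin_cases i
      · exact h.1
      · exact h.2
    rcases hor with h | h
    · have := pow_two_pos_of_ne_zero (sub_ne_zero.mpr h)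
      nlinarith [sq_nonneg (v - b)]
    · have := pow_two_pos_of_ne_zero (sub_ne_zero.mpr h)
      nlinarith [sq_nonneg (u - a)]
  have hK := neoHookean_key_aux γ hγ0 hs01 hp01
  rw [← hcdef] at hK
  have hK' : (a * b) ^ (-γ) / γ - c * (u * v - a * b) ≤ (u * v) ^ (-γ) / γ := by
    have hdd : ((a * b) ^ (-γ) - γ * c * (u * v - a * b)) / γ ≤ (u * v) ^ (-γ) / γ := by
      gcongr
    have heqL : ((a * b) ^ (-γ) - γ * c * (u * v - a * b)) / γ
        = (a * b) ^ (-γ) / γ - c * (u * v - a * b) := by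
      field_simp
    linarith
  have hexp : neoHookean γ p = (a ^ 2 + b ^ 2) / 2 + (a * b) ^ (-γ) / γ := rfl
  have hexq : neoHookean γ q = (u ^ 2 + v ^ 2) / 2 + (u * v) ^ (-γ) / γ := rfl
  rw [hexp, hexq]
  nlinarith [hK', hc0, hc1, hQ, mul_nonneg hc0.le (sq_nonneg ((u - a) - (v - b))),
    mul_pos (by linarith : (0:ℝ) < 1 - c) hQ]
end

section
/- If Σ is a symmetric positive semi-definite N×N matrix of rank N−1 and Q, R ∈ SO(N) satisfy (QR)(RᵀΣR) = Σ, then QR = I, i.e. Q = Rᵀ. -/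
open Matrix

/-- A matrix of rank at most one is an outer product. -/
lemma rank_le_one_outer {N : ℕ} (M : Matrix (Fin N) (Fin N) ℝ) (hM : M.rank ≤ 1) :
    ∃ c v : Fin N → ℝ, M = Matrix.replicateCol (Fin 1) c * Matrix.replicateRow (Fin 1) v := by
  classical
  rw [Matrix.rank_eq_finrank_span_row] at hM
  obtain ⟨v, hv⟩ := (Submodule.finrank_le_one_iff_isPrincipal _).mp hM |>.principal
  have hmem : ∀ i, M i ∈ Submodule.span ℝ ({v} : Set (Fin N → ℝ)) := by
    intro i
    rw [← hv]
    exact Submodule.subset_span ⟨i, rfl⟩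
  choose c hc using fun i => Submodule.mem_span_singleton.mp (hmem i)
  refine ⟨c, v, ?_⟩
  ext i j
  have := congrFun (hc i) j
  simp [Matrix.mul_apply, Matrix.replicateCol, Matrix.replicateRow, ← this]

/-- uniqueness of the proper-orthogonal polar decomposition for a
symmetric positive semidefinite matrix of rank N−1: if Sig ⪰ 0 is symmetric PSD of
rank N−1 and Q, R ∈ SO(N) satisfy (QR)(Rᵀ·Sig·R) = Sig, then QR = I, i.e. Q = Rᵀ. -/
theorem polar_decomposition_uniqueness_rank_deficient_one (N : ℕ)
    (Sig : Matrix (Fin N) (Fin N) ℝ)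
    (hSig : Sig.PosSemidef) (hrank : Sig.rank = N - 1)
    (Q R : Matrix (Fin N) (Fin N) ℝ)
    (hQorth : Qᵀ * Q = 1) (hQdet : Q.det = 1)
    (hRorth : Rᵀ * R = 1) (hRdet : R.det = 1)
    (h : (Q * R) * (Rᵀ * Sig * R) = Sig) :
    Q * R = 1 ∧ Q = Rᵀ := by
  classical
  set U : Matrix (Fin N) (Fin N) ℝ := Q * R with hU
  have hUorth : Uᵀ * U = 1 := by
    rw [hU, transpose_mul, Matrix.mul_assoc, ← Matrix.mul_assoc Qᵀ Q R, hQorth,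
      Matrix.one_mul, hRorth]
  have hUdet : U.det = 1 := by rw [hU, det_mul, hQdet, hRdet, one_mul]
  -- P = RᵀΣR is PSD and satisfies U * P = Σ
  set P : Matrix (Fin N) (Fin N) ℝ := Rᵀ * Sig * R with hPdef
  have hP : P.PosSemidef := by
    have := hSig.conjTranspose_mul_mul_same R
    rwa [conjTranspose_eq_transpose_of_trivial] at this
  have hPsymm : Pᵀ = P := by
    have := hP.isHermitian
    rwa [IsHermitian, conjTranspose_eq_transpose_of_trivial] at this
  have hSsymm : Sigᵀ = Sig := by
    have := hSig.isHermitian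
    rwa [IsHermitian, conjTranspose_eq_transpose_of_trivial] at this
  -- P² = Σ², hence P = Σ
  have key : (U * P)ᵀ * (U * P) = Pᵀ * P := by
    rw [transpose_mul, Matrix.mul_assoc, ← Matrix.mul_assoc Uᵀ U P, hUorth, Matrix.one_mul]
  have hPsq : P ^ 2 = Sig ^ 2 := by
    have h2 : Sigᵀ * Sig = Pᵀ * P := by rw [← h, key]
    calc P ^ 2 = Pᵀ * P := by rw [hPsymm, pow_two]
      _ = Sigᵀ * Sig := h2.symm
      _ = Sig ^ 2 := by rw [hSsymm, pow_two]
  have hPS : P = Sig := by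
    open scoped MatrixOrder in
    exact (CFC.sq_eq_sq_iff P Sig hP.nonneg hSig.nonneg).mp hPsq
  -- hence U * Σ = Σ, so M := U - 1 satisfies M * Σ = 0
  have hUSig : U * Sig = Sig := by rw [hPS] at h; exact h
  set M : Matrix (Fin N) (Fin N) ℝ := U - 1 with hM
  have hMSig : M * Sig = 0 := by
    rw [hM, Matrix.sub_mul, hUSig, Matrix.one_mul, sub_self]
  have hrankM : M.rank ≤ 1 := by
    have := Matrix.rank_add_rank_le_card_of_mul_eq_zero hMSig
    rw [hrank, Fintype.card_fin] at this
    omega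
  obtain ⟨c, v, hcv⟩ := rank_le_one_outer M hrankM
  -- det U = 1 gives 1 + v ⬝ᵥ c = 1, so the trace of M vanishes
  have hdet1 : (1 : ℝ) + v ⬝ᵥ c = 1 := by
    have hU1M : U = 1 + Matrix.replicateCol (Fin 1) c * Matrix.replicateRow (Fin 1) v := by
      rw [← hcv, hM]; abel
    rw [← Matrix.det_one_add_replicateCol_mul_replicateRow (ι := Fin 1) c v]
    rw [hU1M] at hUdet
    exact hUdet
  have htr : M.trace = 0 := by
    have : M.trace = v ⬝ᵥ c := by
      rw [hcv]
      simp [Matrix.trace, Matrix.mul_apply, Matrix.diag, dotProduct, mul_comm]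
    rw [this]; linarith
  -- orthogonality: Mᵀ + M + MᵀM = 0, take traces
  have horth : Mᵀ * M + Mᵀ + M = 0 := by
    have h1 : (M + 1)ᵀ * (M + 1) = 1 := by
      rw [hM]; simpa using hUorth
    have expand : Mᵀ * M + Mᵀ + M + 1 = 1 := by
      calc Mᵀ * M + Mᵀ + M + 1 = (Mᵀ + 1) * (M + 1) := by noncomm_ring
        _ = (M + 1)ᵀ * (M + 1) := by rw [transpose_add, transpose_one]
        _ = 1 := h1
    have := congrArg (· - (1 : Matrix (Fin N) (Fin N) ℝ)) expand
    simpa using this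
  have htrMM : (Mᵀ * M).trace = 0 := by
    have := congrArg Matrix.trace horth
    rw [Matrix.trace_add, Matrix.trace_add, Matrix.trace_transpose, htr,
      Matrix.trace_zero] at this
    linarith
  -- trace(MᵀM) = sum of squares of entries, so M = 0
  have hMzero : M = 0 := by
    have hsum : ∑ i, ∑ j, (M j i) ^ 2 = 0 := by
      have : (Mᵀ * M).trace = ∑ i, ∑ j, (M j i) ^ 2 := by
        simp [Matrix.trace, Matrix.diag, Matrix.mul_apply, pow_two]
      rw [← this, htrMM]
    ext a b
    have h2 := (Finset.sum_eq_zero_iff_of_nonneg (fun x _ =>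
      Finset.sum_nonneg (fun y _ => sq_nonneg (M y x)))).mp hsum b (Finset.mem_univ b)
    have h3 := (Finset.sum_eq_zero_iff_of_nonneg (fun y _ =>
      sq_nonneg (M y b))).mp h2 a (Finset.mem_univ a)
    simpa using pow_eq_zero_iff (two_ne_zero) |>.mp h3
  have hQR : Q * R = 1 := by
    have hU1 : U = 1 := by
      have : U - 1 = 0 := hMzero
      rwa [sub_eq_zero] at this
    rwa [hU] at hU1
  refine ⟨hQR, ?_⟩
  have hRRT : R * Rᵀ = 1 := mul_eq_one_comm.mp hRorth
  calc Q = Q * (R * Rᵀ) := by rw [hRRT, Matrix.mul_one]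
    _ = (Q * R) * Rᵀ := by rw [Matrix.mul_assoc]
    _ = Rᵀ := by rw [hQR, Matrix.one_mul]
end

section
/- No two distinct rotations are rank-one connected: if R ∈ SO(N) and R = I + a ⊗ b for vectors a, b ∈ ℝᴺ, then R = I. -/
open Matrix

/-- no rotation other than the identity is rank-one connected to
the identity: if R ∈ SO(N) and R = I + a ⊗ b, then R = I. -/
theorem no_rank_one_connection_between_rotations (N : ℕ)
    (R : Matrix (Fin N) (Fin N) ℝ)
    (hRorth : Rᵀ * R = 1) (hRdet : R.det = 1)
    (a b : Fin N → ℝ) (h : R = 1 + vecMulVec a b) :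
    R = 1 := by
  have hdet : (1 : ℝ) + b ⬝ᵥ a = 1 := by
    rw [h, vecMulVec_eq Unit, det_one_add_replicateCol_mul_replicateRow] at hRdet
    exact hRdet
  have hba : b ⬝ᵥ a = 0 := by linarith
  have hab : a ⬝ᵥ b = 0 := by rw [dotProduct_comm]; exact hba
  have hvm : vecMulVec a b *ᵥ b = (b ⬝ᵥ b) • a := by
    funext i
    simp [vecMulVec_apply, mulVec, dotProduct, Finset.mul_sum, Finset.sum_mul,
      mul_comm, mul_left_comm]
  have hmv : R *ᵥ b = b + (b ⬝ᵥ b) • a := by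
    rw [h, add_mulVec, one_mulVec, hvm]
  have hb : b ⬝ᵥ b = (R *ᵥ b) ⬝ᵥ (R *ᵥ b) := by
    calc b ⬝ᵥ b = b ⬝ᵥ ((Rᵀ * R) *ᵥ b) := by rw [hRorth, one_mulVec]
    _ = (R *ᵥ b) ⬝ᵥ (R *ᵥ b) := by
        rw [← mulVec_mulVec, dotProduct_mulVec, vecMul_transpose]
  rw [hmv] at hb
  simp [dotProduct_add, add_dotProduct, dotProduct_smul, smul_dotProduct, hab, hba,
    smul_eq_mul] at hb
  rcases hb with hb0 | ha0
  · rw [h, hb0]; ext i j; simp [vecMulVec_apply]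
  · rw [h, ha0]; ext i j; simp [vecMulVec_apply]
end

section
/- Let ψ′(J) = k(J − (1+k)/k) and f(J) = −√(25/(1+24J)) for J > 0. Then J = 1 is always a solution of ψ′(J) = f(J), and for every k with 12/25 < k < 4 there exists a second solution J* ∈ (0,1) of ψ′(J) = f(J). -/
open Real

/-- with ψ′(J) = k(J − (1+k)/k) and f(J) = −√(25/(1+24J)),
J = 1 always solves ψ′(J) = f(J), and for every k with 12/25 < k < 4 there is a
second solution J* ∈ (0,1). -/
theorem second_root_of_radial_boundary_equation (k : ℝ) (hk : 0 < k) :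
    k * (1 - (1 + k) / k) = -Real.sqrt (25 / (1 + 24 * 1)) ∧
    (12 / 25 < k → k < 4 →
      ∃ J : ℝ, 0 < J ∧ J < 1 ∧
        k * (J - (1 + k) / k) = -Real.sqrt (25 / (1 + 24 * J))) := by
  have hk' : k ≠ 0 := ne_of_gt hk
  have h25 : Real.sqrt 25 = 5 := by
    rw [show (25:ℝ) = 5^2 by norm_num, Real.sqrt_sq (by norm_num)]
  have hone : k * (1 - (1 + k) / k) = -Real.sqrt (25 / (1 + 24 * 1)) := by
    rw [show (25 : ℝ) / (1 + 24 * 1) = 1 by norm_num, Real.sqrt_one]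
    field_simp
    ring
  refine ⟨hone, fun h1 h2 => ?_⟩
  set g : ℝ → ℝ := fun J => k * (J - (1 + k) / k) + Real.sqrt (25 / (1 + 24 * J))
    with hg
  have hg1 : g 1 = 0 := by
    simp only [hg]
    rw [show (25 : ℝ) / (1 + 24 * 1) = 1 by norm_num, Real.sqrt_one]
    field_simp
    ring
  -- derivative of g at 1 is k - 12/25 > 0
  have hu : HasDerivAt (fun J : ℝ => 25 / (1 + 24 * J)) (-24/25) 1 := by
    have h1' : HasDerivAt (fun J : ℝ => 1 + 24 * J) 24 1 := by
      simpa using (hasDerivAt_id (1:ℝ)).const_mul 24 |>.const_add 1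
    have := (hasDerivAt_const (1:ℝ) (25:ℝ)).div h1' (by norm_num)
    refine this.congr_deriv ?_
    norm_num
  have hsq : HasDerivAt (fun J : ℝ => Real.sqrt (25 / (1 + 24 * J))) (-12/25) 1 := by
    have hval : (25 : ℝ) / (1 + 24 * 1) = 1 := by norm_num
    have hs := (Real.hasDerivAt_sqrt (x := 25 / (1 + 24 * (1:ℝ))) (by norm_num)).comp 1 hu
    refine hs.congr_deriv ?_
    rw [hval, Real.sqrt_one]
    norm_num
  have hgd : HasDerivAt g (k - 12/25) 1 := by
    have hlin : HasDerivAt (fun J : ℝ => k * (J - (1 + k) / k)) k 1 := by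
      simpa using ((hasDerivAt_id (1:ℝ)).sub_const ((1+k)/k)).const_mul k
    have h := hlin.add hsq
    rw [show k - 12/25 = k + -12/25 by ring]
    exact h
  have hslope : Filter.Tendsto (slope g 1) (nhdsWithin 1 {(1:ℝ)}ᶜ) (nhds (k - 12/25)) :=
    hasDerivAt_iff_tendsto_slope.mp hgd
  have hpos : ∀ᶠ y in nhdsWithin 1 {(1:ℝ)}ᶜ, 0 < slope g 1 y :=
    hslope.eventually (eventually_gt_nhds (by linarith))
  have hpos' : ∀ᶠ y in nhdsWithin (1:ℝ) (Set.Iio 1), 0 < slope g 1 y :=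
    hpos.filter_mono (nhdsWithin_mono _ (fun x hx => ne_of_lt hx))
  have hIoo : ∀ᶠ y in nhdsWithin (1:ℝ) (Set.Iio 1), y ∈ Set.Ioo (0:ℝ) 1 :=
    Filter.eventually_mem_set.mpr (Ioo_mem_nhdsLT_of_mem (by norm_num))
  obtain ⟨c, hc1, hc2⟩ := (hpos'.and hIoo).exists
  have hc01 : c ∈ Set.Ioo (0:ℝ) 1 := hc2
  -- g c < 0
  have hgc : g c < 0 := by
    have hs : slope g 1 c = (g c - g 1) / (c - 1) := by
      rw [slope_def_field]
    rw [hs, hg1, sub_zero] at hc1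
    have hcn : c - 1 < 0 := by linarith [hc01.2]
    by_contra h
    push_neg at h
    have : g c / (c - 1) ≤ 0 := div_nonpos_of_nonneg_of_nonpos h (le_of_lt hcn)
    linarith
  -- g 0 > 0
  have hg0 : g 0 = 4 - k := by
    simp only [hg]
    rw [show (25 : ℝ) / (1 + 24 * 0) = 25 by norm_num, h25]
    field_simp
    ring
  have hg0pos : 0 < g 0 := by rw [hg0]; linarith
  -- continuity on [0, c]
  have hcont : ContinuousOn g (Set.Icc 0 c) := by
    apply ContinuousOn.add
    · exact (continuous_const.mul (continuous_id.sub continuous_const)).continuousOn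
    · apply ContinuousOn.sqrt
      apply ContinuousOn.div continuousOn_const
      · exact (continuous_const.add (continuous_const.mul continuous_id)).continuousOn
      · intro x hx
        have : (0:ℝ) ≤ x := hx.1
        nlinarith
  have := intermediate_value_Ioo' (le_of_lt hc01.1) hcont
  have hmem : (0:ℝ) ∈ Set.Ioo (g c) (g 0) := ⟨hgc, hg0pos⟩
  obtain ⟨J, hJ, hgJ⟩ := this hmem
  refine ⟨J, hJ.1, lt_trans hJ.2 hc01.2, ?_⟩
  have : k * (J - (1 + k) / k) + Real.sqrt (25 / (1 + 24 * J)) = 0 := hgJ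
  linarith
end
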